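/- arXiv:0707.1512 — 4 statements merged into one kernel-verified Lean document; each statement's English description precedes it below -/
import Mathlib

section
/- The fixed point set of γ(x) = (-x₁,x₂,-x₃,x₄,-x₅+1/2,x₆,-x₇+1/2) on 𝕋⁷ is the union of the 16 disjoint 3-tori {x : x₁,x₃ ∈ {0,1/2}, x₅,x₇ ∈ {1/4, 3/4}}, and the composite βγ (where β(x) = (x₁,-x₂,-x₃,x₄,x₅,-x₆+1/2,-x₇)) acts on 𝕋⁷ without fixed points. -/
/-- The circle `ℝ/ℤ`. -/
abbrev Circ := AddCircle (1 : ℝ)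

/-- The 7-torus `𝕋⁷ = ℝ⁷/ℤ⁷`. -/
abbrev T7 := Fin 7 → Circ

noncomputable def half : Circ := ((1/2 : ℝ) : Circ)

/-- The involution `α(x) = (x₁,x₂,x₃,-x₄,-x₅,-x₆,-x₇)`. -/
noncomputable def tα (x : T7) : T7 := ![x 0, x 1, x 2, -x 3, -x 4, -x 5, -x 6]

/-- The involution `β(x) = (x₁,-x₂,-x₃,x₄,x₅,-x₆+1/2,-x₇)`. -/
noncomputable def tβ (x : T7) : T7 := ![x 0, -x 1, -x 2, x 3, x 4, -x 5 + half, -x 6]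

/-- The involution `γ(x) = (-x₁,x₂,-x₃,x₄,-x₅+1/2,x₆,-x₇+1/2)`. -/
noncomputable def tγ (x : T7) : T7 := ![-x 0, x 1, -x 2, x 3, -x 4 + half, x 5, -x 6 + half]

noncomputable def quarter : Circ := ((1/4 : ℝ) : Circ)
noncomputable def threeQuarter : Circ := ((3/4 : ℝ) : Circ)

/-!
Every coordinate of `γ` is `x ↦ x`, `x ↦ -x` or `x ↦ -x + 1/2`. On `ℝ/ℤ`, `-x = x` says `2x = 0`,
and `-x + 1/2 = x` says `2(x - 1/4) = 0`; the two-torsion of the circle is `{0, 1/2}`. The seventh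
coordinate of `βγ` is `x₇ ↦ x₇ - 1/2`, which has no fixed point.
-/

namespace AddCircle

variable {𝕜 : Type*} [Field 𝕜] [LinearOrder 𝕜] [IsStrictOrderedRing 𝕜] {p : 𝕜} [Fact (0 < p)]

theorem two_nsmul_eq_zero_iff {u : AddCircle p} : 2 • u = 0 ↔ u = 0 ∨ u = ↑(p / 2) := by
  rw [AddCircle.nsmul_eq_zero_iff two_pos]
  simp [Nat.le_one_iff_eq_zero_or_eq_one, or_and_right, exists_or, eq_comm, div_mul_eq_mul_div]

end AddCircle

theorem neg_add_eq_self_iff_two_nsmul_sub_eq_zero {G : Type*} [AddCommGroup G] {a c x : G}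
    (h : 2 • a = c) : -x + c = x ↔ 2 • (x - a) = 0 := by
  rw [nsmul_sub, h, sub_eq_zero, neg_add_eq_iff_eq_add, two_nsmul, eq_comm]

theorem neg_eq_self_iff_eq_zero_or_eq_half (x : Circ) : -x = x ↔ x = 0 ∨ x = half := by
  rw [neg_eq_iff_add_eq_zero, ← two_nsmul]
  exact AddCircle.two_nsmul_eq_zero_iff

theorem two_nsmul_quarter : 2 • quarter = half := by
  rw [quarter, half, ← AddCircle.coe_nsmul]
  norm_num

theorem threeQuarter_eq_quarter_add_half : threeQuarter = quarter + half := by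
  rw [quarter, half, threeQuarter, ← AddCircle.coe_add]
  norm_num

theorem neg_add_half_eq_self_iff (x : Circ) :
    -x + half = x ↔ x = quarter ∨ x = threeQuarter := by
  rw [neg_add_eq_self_iff_two_nsmul_sub_eq_zero two_nsmul_quarter,
    AddCircle.two_nsmul_eq_zero_iff, threeQuarter_eq_quarter_add_half, sub_eq_zero,
    sub_eq_iff_eq_add']
  rfl

theorem zero_ne_half : (0 : Circ) ≠ half := by
  rw [half, ← AddCircle.coe_zero, Ne, AddCircle.coe_eq_coe_iff_of_mem_Ico (a := 0)] <;> norm_num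

theorem quarter_ne_threeQuarter : quarter ≠ threeQuarter := by
  rw [quarter, threeQuarter, Ne, AddCircle.coe_eq_coe_iff_of_mem_Ico (a := 0)] <;> norm_num

theorem tγ_eq_self_iff (x : T7) :
    tγ x = x ↔ ((x 0 = 0 ∨ x 0 = half) ∧ (x 2 = 0 ∨ x 2 = half) ∧
      (x 4 = quarter ∨ x 4 = threeQuarter) ∧ (x 6 = quarter ∨ x 6 = threeQuarter)) := by
  simp [funext_iff, Fin.forall_fin_succ, tγ, neg_eq_self_iff_eq_zero_or_eq_half,
    neg_add_half_eq_self_iff]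

theorem tβ_tγ_apply_six (x : T7) : tβ (tγ x) 6 = x 6 - half := by
  change -(-x 6 + half) = _
  abel

theorem tβ_tγ_ne_self (x : T7) : tβ (tγ x) ≠ x := fun h => by
  have h₆ := congrFun h 6
  rw [tβ_tγ_apply_six, sub_eq_self] at h₆
  exact zero_ne_half h₆.symm

/-- The fixed point set of `γ` on `𝕋⁷` is the union of the 16 disjoint 3-tori
`{x : x₁,x₃ ∈ {0,1/2}, x₅,x₇ ∈ {1/4,3/4}}`, and the composite `βγ` acts on
`𝕋⁷` without fixed points. -/
theorem fix_gamma_and_betagamma_free :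
    (∀ x : T7, tγ x = x ↔
      ((x 0 = 0 ∨ x 0 = half) ∧ (x 2 = 0 ∨ x 2 = half) ∧
       (x 4 = quarter ∨ x 4 = threeQuarter) ∧
       (x 6 = quarter ∨ x 6 = threeQuarter))) ∧
    ((0 : Circ) ≠ half ∧ quarter ≠ threeQuarter) ∧
    (∀ x : T7, tβ (tγ x) ≠ x) :=
  ⟨tγ_eq_self_iff, ⟨zero_ne_half, quarter_ne_threeQuarter⟩, tβ_tγ_ne_self⟩
end

section
/- The fixed point sets of the three involutions α, β, γ on 𝕋⁷ are pairwise disjoint: no point of 𝕋⁷ is fixed by two distinct elements among α, β, γ. -/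
theorem half_ne_zero : half ≠ 0 := by
  rw [half, Ne, AddCircle.coe_eq_zero_iff_of_mem_Ico (by norm_num)]
  norm_num

theorem not_fixed_and_fixed_of_apply_eq_neg {ι G : Type*} [AddGroup G]
    {f g : (ι → G) → ι → G} {c : G} (hc : c ≠ 0) (i : ι)
    (hf : ∀ x, f x i = -x i) (hg : ∀ x, g x i = -x i + c) (x : ι → G) :
    ¬(f x = x ∧ g x = x) := by
  rintro ⟨hfx, hgx⟩
  have hneg : -x i = x i := (hf x).symm.trans (congr_fun hfx i)
  have hshift : -x i + c = x i := (hg x).symm.trans (congr_fun hgx i)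
  exact hc (left_eq_add.mp (hneg.trans hshift.symm))

/-- The fixed point sets of `α, β, γ` on `𝕋⁷` are pairwise disjoint: no point
is fixed by two distinct elements among `α, β, γ`. -/
theorem fixed_sets_pairwise_disjoint :
    (∀ x : T7, ¬(tα x = x ∧ tβ x = x)) ∧
    (∀ x : T7, ¬(tα x = x ∧ tγ x = x)) ∧
    (∀ x : T7, ¬(tβ x = x ∧ tγ x = x)) := by
  -- The separating coordinates are x₆, x₅, x₇, i.e. the zero-based indices 5, 4, 6.
  refine ⟨?_, ?_, ?_⟩
  · exact not_fixed_and_fixed_of_apply_eq_neg half_ne_zero 5 (fun _ => rfl) (fun _ => rfl)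
  · exact not_fixed_and_fixed_of_apply_eq_neg half_ne_zero 4 (fun _ => rfl) (fun _ => rfl)
  · exact not_fixed_and_fixed_of_apply_eq_neg half_ne_zero 6 (fun _ => rfl) (fun _ => rfl)
end

section
/- The involution β acts on the fixed point set of α, permuting its 16 component 3-tori without fixed points, so that Fix(α)/⟨β⟩ consists of 8 tori; similarly γ acts freely on Fix(α), and the group ⟨β,γ⟩ ≅ (ℤ/2)² acts freely on the set of 16 components of Fix(α) with 4 orbits. -/
/-- The component of `Fix(α)` indexed by `c ∈ {0,1/2}⁴` (recorded as a Boolean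
quadruple): the 3-torus where coordinates `x₄,x₅,x₆,x₇` take the values
prescribed by `c`. -/
noncomputable def compα (c : Fin 4 → Bool) : Set T7 :=
  {x | ∀ i : Fin 4, x (![3, 4, 5, 6] i) = if c i then half else 0}

/-- The permutation induced by `β` on the 16 components of `Fix(α)`:
it flips the `x₆`-coordinate label. -/
def βIdx (c : Fin 4 → Bool) : Fin 4 → Bool := ![c 0, c 1, !c 2, c 3]

/-- The permutation induced by `γ` on the 16 components of `Fix(α)`:
it flips the `x₅`- and `x₇`-coordinate labels. -/
def γIdx (c : Fin 4 → Bool) : Fin 4 → Bool := ![c 0, !c 1, c 2, !c 3]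

/-! On `Fix(α)` each of `x₄, …, x₇` satisfies `-y = y`, so it is a 2-torsion point of `ℝ/ℤ`,
i.e. `0` or `1/2`. There `-y + 1/2 = y + 1/2 ≠ y`, so `β` (through `x₆`) and `γ` (through `x₅`)
have no fixed points and flip the corresponding labels; on the labels `{0,1/2}⁴ ≅ (ℤ/2)⁴` the
group `⟨β,γ⟩` acts by translations by a subgroup of order 4, hence freely with `16/4 = 4` orbits. -/

namespace AddCircle

variable {𝕜 : Type*} [Field 𝕜] [LinearOrder 𝕜] [IsStrictOrderedRing 𝕜] {p : 𝕜} [Fact (0 < p)]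

theorem coe_half_period_ne_zero : ((p / 2 : 𝕜) : AddCircle p) ≠ 0 := fun h =>
  by simpa [h] using addOrderOf_period_div (p := p) two_pos

theorem neg_eq_self_iff {u : AddCircle p} :
    -u = u ↔ u = 0 ∨ u = ((p / 2 : 𝕜) : AddCircle p) := by
  rw [neg_eq_iff_add_eq_zero, ← two_nsmul, AddCircle.nsmul_eq_zero_iff two_pos]
  constructor
  · rintro ⟨m, hm, rfl⟩
    interval_cases m <;> simp [inv_mul_eq_div]
  · rintro (rfl | rfl)
    · exact ⟨0, two_pos, by simp⟩
    · exact ⟨1, one_lt_two, by simp [inv_mul_eq_div]⟩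

end AddCircle

theorem neg_half : -half = half :=
  AddCircle.neg_eq_self_iff.mpr (Or.inr (by rw [half, one_div]))

theorem half_add_half : half + half = 0 := neg_eq_iff_add_eq_zero.mp neg_half

theorem neg_eq_self_iff_exists_bool {y : Circ} :
    -y = y ↔ ∃ b : Bool, y = if b then half else 0 := by
  simp [AddCircle.neg_eq_self_iff, half]

theorem neg_ite_half (b : Bool) : -(if b then half else 0) = if b then half else 0 := by
  cases b <;> simp [neg_half]

theorem neg_ite_half_add_half (b : Bool) :
    -(if b then half else 0) + half = if !b then half else 0 := by
  cases b <;> simp [neg_half, half_add_half]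

theorem neg_add_half_ne_self {y : Circ} (hy : -y = y) : -y + half ≠ y := by
  rw [hy, Ne, add_eq_left]
  exact half_ne_zero

theorem tα_eq_self_iff {x : T7} : tα x = x ↔ ∃ c, x ∈ compα c := by
  have h : tα x = x ↔ ∀ i : Fin 4, -x (![3, 4, 5, 6] i) = x (![3, 4, 5, 6] i) := by
    simp [funext_iff, Fin.forall_fin_succ, tα]
  simp only [h, neg_eq_self_iff_exists_bool, compα, Set.mem_ofPred_eq]
  exact Classical.skolem

theorem tβ_ne_self {x : T7} (hx : tα x = x) : tβ x ≠ x := fun h =>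
  neg_add_half_ne_self (congrFun hx 5) (congrFun h 5)

theorem tγ_ne_self {x : T7} (hx : tα x = x) : tγ x ≠ x := fun h =>
  neg_add_half_ne_self (congrFun hx 4) (congrFun h 4)

theorem tβ_mem_compα {c : Fin 4 → Bool} {x : T7} (hx : x ∈ compα c) :
    tβ x ∈ compα (βIdx c) := by
  intro i
  fin_cases i
  · exact hx 0
  · exact hx 1
  · exact (congrArg (-· + half) (hx 2)).trans (neg_ite_half_add_half _)
  · exact (congrArg Neg.neg (hx 3)).trans (neg_ite_half _)

theorem tγ_mem_compα {c : Fin 4 → Bool} {x : T7} (hx : x ∈ compα c) :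
    tγ x ∈ compα (γIdx c) := by
  intro i
  fin_cases i
  · exact hx 0
  · exact (congrArg (-· + half) (hx 1)).trans (neg_ite_half_add_half _)
  · exact hx 2
  · exact (congrArg (-· + half) (hx 3)).trans (neg_ite_half_add_half _)

/-- `c₀` and `c₁ xor c₃` are invariant under both flips and together separate the orbits. -/
def orbitIdx (c : Fin 4 → Bool) : Fin 4 :=
  Fin.ofNat 4 (2 * (c 0).toNat + (xor (c 1) (c 3)).toNat)

/-- `β` acts on `Fix(α)` permuting its 16 component 3-tori without fixed
points, pairing them so `Fix(α)/⟨β⟩` consists of 8 tori; likewise `γ` acts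
freely on `Fix(α)`, and `⟨β,γ⟩ ≅ (ℤ/2)²` acts freely on the set of 16
components with exactly 4 orbits. -/
theorem beta_gamma_on_fix_alpha :
    -- `Fix(α)` is the union of the 16 components
    (∀ x : T7, tα x = x ↔ ∃ c, x ∈ compα c) ∧
    -- `β` and `γ` act on `Fix(α)` without fixed points
    (∀ x : T7, tα x = x → tβ x ≠ x) ∧
    (∀ x : T7, tα x = x → tγ x ≠ x) ∧
    -- `β`, `γ` send the component `c` to `βIdx c`, `γIdx c` respectively
    (∀ c, ∀ x ∈ compα c, tβ x ∈ compα (βIdx c)) ∧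
    (∀ c, ∀ x ∈ compα c, tγ x ∈ compα (γIdx c)) ∧
    -- the induced `(ℤ/2)²`-action on the 16 components is free
    (∀ c, βIdx (βIdx c) = c ∧ γIdx (γIdx c) = c ∧ βIdx (γIdx c) = γIdx (βIdx c)) ∧
    (∀ c, βIdx c ≠ c ∧ γIdx c ≠ c ∧ βIdx (γIdx c) ≠ c) ∧
    -- and it has exactly 4 orbits
    (∃ r : (Fin 4 → Bool) → Fin 4, Function.Surjective r ∧
      (∀ c, r (βIdx c) = r c ∧ r (γIdx c) = r c) ∧
      (∀ c c', r c = r c' →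
        c' = c ∨ c' = βIdx c ∨ c' = γIdx c ∨ c' = βIdx (γIdx c))) := by
  refine ⟨fun _ => tα_eq_self_iff, fun _ => tβ_ne_self, fun _ => tγ_ne_self,
    fun _ _ => tβ_mem_compα, fun _ _ => tγ_mem_compα, by decide, by decide,
    ⟨orbitIdx, by decide, by decide, by decide⟩⟩
end

section
/- The involutions β and γ restrict to the 3-torus 𝕋³ with coordinates (x₅,x₆,x₇) as β(x₅,x₆,x₇) = (x₅, -x₆+1/2, -x₇) and γ(x₅,x₆,x₇) = (-x₅+1/2, x₆, -x₇+1/2); each fixes exactly 4 disjoint circles, βγ acts freely, and all 8 fixed circles are pairwise disjoint. -/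
/-- The 3-torus `𝕋³ = ℝ³/ℤ³`, with coordinates `(x₅,x₆,x₇)`. -/
abbrev T3 := Fin 3 → Circ

/-- The restriction of `β` to `𝕋³₍₅₆₇₎`: `(x₅,x₆,x₇) ↦ (x₅, -x₆+1/2, -x₇)`. -/
noncomputable def bβ (x : T3) : T3 := ![x 0, -x 1 + half, -x 2]

/-- The restriction of `γ` to `𝕋³₍₅₆₇₎`: `(x₅,x₆,x₇) ↦ (-x₅+1/2, x₆, -x₇+1/2)`. -/
noncomputable def bγ (x : T3) : T3 := ![-x 0 + half, x 1, -x 2 + half]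

/-- One of the four circles of `Fix(β) = S¹ × {1/4,3/4} × {0,1/2}`. -/
noncomputable def circβ (b c : Bool) : Set T3 :=
  {x | x 1 = (if b then threeQuarter else quarter) ∧ x 2 = (if c then half else 0)}

/-- One of the four circles of `Fix(γ) = {1/4,3/4} × S¹ × {1/4,3/4}`. -/
noncomputable def circγ (a c : Bool) : Set T3 :=
  {x | x 0 = (if a then threeQuarter else quarter) ∧
       x 2 = (if c then threeQuarter else quarter)}

namespace AddCircle

variable {𝕜 : Type*} [Field 𝕜] [LinearOrder 𝕜] [IsStrictOrderedRing 𝕜] {p : 𝕜} [Fact (0 < p)]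

theorem neg_add_coe_eq_self_iff {x : AddCircle p} {c : 𝕜} :
    -x + c = x ↔ x = ↑(c / 2) ∨ x = ↑(c / 2 + p / 2) := by
  have hc : (c : AddCircle p) = 2 • ((c / 2 : 𝕜) : AddCircle p) := by
    rw [← coe_nsmul, two_nsmul, add_halves]
  rw [hc, neg_add_eq_iff_eq_add, ← two_nsmul, eq_comm, ← sub_eq_zero, ← nsmul_sub,
    two_nsmul_eq_zero_iff, sub_eq_zero, sub_eq_iff_eq_add, coe_add,
    add_comm ((p / 2 : 𝕜) : AddCircle p)]

end AddCircle

theorem Bool.exists_eq_ite_iff {α : Type*} {t u v : α} :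
    (∃ b : Bool, t = if b then v else u) ↔ t = u ∨ t = v := by
  simp [Bool.exists_bool]

theorem Bool.ite_injective {α : Type*} {u v : α} (h : u ≠ v) :
    Function.Injective fun b : Bool => if b then v else u := by
  intro b b'
  cases b <;> cases b' <;> simp [h, h.symm]

namespace Circ

theorem coe_ne_coe {r s : ℝ} (hr : r ∈ Set.Ico 0 1) (hs : s ∈ Set.Ico 0 1) (h : r ≠ s) :
    (r : Circ) ≠ s :=
  fun e => h ((AddCircle.coe_eq_coe_iff_of_mem_Ico (a := 0) (by simpa) (by simpa)).1 e)

theorem quarter_ne_threeQuarter : quarter ≠ threeQuarter :=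
  coe_ne_coe (by norm_num) (by norm_num) (by norm_num)

theorem half_ne_zero : half ≠ 0 := by
  rw [← AddCircle.coe_zero]
  exact coe_ne_coe (by norm_num) (by norm_num) (by norm_num)

theorem neg_add_half_eq_self_iff {t : Circ} : -t + half = t ↔ t = quarter ∨ t = threeQuarter := by
  rw [half, AddCircle.neg_add_coe_eq_self_iff, quarter, threeQuarter]
  norm_num

theorem neg_eq_self_iff {t : Circ} : -t = t ↔ t = 0 ∨ t = half := by
  rw [neg_eq_iff_add_eq_zero, ← two_nsmul, AddCircle.two_nsmul_eq_zero_iff, half]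

end Circ

theorem bβ_eq_self_iff {x : T3} : bβ x = x ↔ -x 1 + half = x 1 ∧ -x 2 = x 2 := by
  simp [bβ, funext_iff, Fin.forall_fin_succ]

theorem bγ_eq_self_iff {x : T3} : bγ x = x ↔ -x 0 + half = x 0 ∧ -x 2 + half = x 2 := by
  simp [bγ, funext_iff, Fin.forall_fin_succ]

theorem bβ_bγ_apply_two (x : T3) : bβ (bγ x) 2 = x 2 - half := by
  simp [bβ, bγ, sub_eq_add_neg, add_comm]

theorem bβ_bγ_ne_self (x : T3) : bβ (bγ x) ≠ x := fun h =>
  Circ.half_ne_zero (by simpa using (bβ_bγ_apply_two x).symm.trans (congrFun h 2))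

theorem bβ_eq_self_iff_exists_mem_circβ {x : T3} : bβ x = x ↔ ∃ b c, x ∈ circβ b c := by
  simp only [bβ_eq_self_iff, Circ.neg_add_half_eq_self_iff, Circ.neg_eq_self_iff, circβ,
    Set.mem_ofPred_eq, exists_and_left, exists_and_right, Bool.exists_eq_ite_iff]

theorem bγ_eq_self_iff_exists_mem_circγ {x : T3} : bγ x = x ↔ ∃ a c, x ∈ circγ a c := by
  simp only [bγ_eq_self_iff, Circ.neg_add_half_eq_self_iff, circγ,
    Set.mem_ofPred_eq, exists_and_left, exists_and_right, Bool.exists_eq_ite_iff]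

theorem disjoint_circβ {b c b' c' : Bool} (h : (b, c) ≠ (b', c')) :
    Disjoint (circβ b c) (circβ b' c') :=
  Set.disjoint_left.2 fun _ ⟨h1, h2⟩ ⟨h1', h2'⟩ => h <| Prod.ext
    (Bool.ite_injective Circ.quarter_ne_threeQuarter (h1.symm.trans h1'))
    (Bool.ite_injective Circ.half_ne_zero.symm (h2.symm.trans h2'))

theorem disjoint_circγ {a c a' c' : Bool} (h : (a, c) ≠ (a', c')) :
    Disjoint (circγ a c) (circγ a' c') :=
  Set.disjoint_left.2 fun _ ⟨h0, h2⟩ ⟨h0', h2'⟩ => h <| Prod.ext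
    (Bool.ite_injective Circ.quarter_ne_threeQuarter (h0.symm.trans h0'))
    (Bool.ite_injective Circ.quarter_ne_threeQuarter (h2.symm.trans h2'))

theorem disjoint_circβ_circγ (b c a c' : Bool) : Disjoint (circβ b c) (circγ a c') := by
  refine Set.disjoint_left.2 fun x hβ hγ => bβ_bγ_ne_self x ?_
  rw [bγ_eq_self_iff_exists_mem_circγ.2 ⟨a, c', hγ⟩, bβ_eq_self_iff_exists_mem_circβ.2 ⟨b, c, hβ⟩]

/-- On `𝕋³₍₅₆₇₎`, each of `β` and `γ` fixes exactly 4 disjoint circles,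
`βγ` acts freely, and all 8 fixed circles are pairwise disjoint. -/
theorem fix_beta_gamma_on_T3 :
    -- `Fix(β)` is the union of the four circles `circβ b c`
    (∀ x : T3, bβ x = x ↔ ∃ b c, x ∈ circβ b c) ∧
    -- `Fix(γ)` is the union of the four circles `circγ a c`
    (∀ x : T3, bγ x = x ↔ ∃ a c, x ∈ circγ a c) ∧
    -- the four `β`-circles are pairwise disjoint, as are the four `γ`-circles
    (∀ b c b' c', (b, c) ≠ (b', c') → Disjoint (circβ b c) (circβ b' c')) ∧
    (∀ a c a' c', (a, c) ≠ (a', c') → Disjoint (circγ a c) (circγ a' c')) ∧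
    -- no `β`-circle meets a `γ`-circle
    (∀ b c a c', Disjoint (circβ b c) (circγ a c')) ∧
    -- `βγ` acts freely
    (∀ x : T3, bβ (bγ x) ≠ x) :=
  ⟨fun _ => bβ_eq_self_iff_exists_mem_circβ, fun _ => bγ_eq_self_iff_exists_mem_circγ,
    fun _ _ _ _ => disjoint_circβ, fun _ _ _ _ => disjoint_circγ, disjoint_circβ_circγ,
    bβ_bγ_ne_self⟩
end
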